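/- Let $\mathcal{B}$ be a collection of compact convex sets in $\mathbb{R}^d$ and $0 \leq k < d$. If the monochromatic $(\aleph_0,k+2)$-theorem holds for $\mathcal{B}$ with respect to $k$-flats (every subfamily of $\mathcal{B}$ satisfying the $(\aleph_0,k+2)$-property with respect to $k$-flats is pierceable by finitely many $k$-flats), then the heterochromatic $(\aleph_0,k+2)$-theorem also holds for $\mathcal{B}$ with respect to $k$-flats: every sequence $\{\mathcal{F}_n\}_{n\in\mathbb{N}}$ of subfamilies of $\mathcal{B}$ in which no family is pierceable by finitely many $k$-flats admits a $k$-independent heterochromatic sequence. -/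
import Mathlib


/-- A `k`-flat in `ℝ^d`: a (nonempty) affine subspace of dimension `k`. -/
def IsKFlat {d : ℕ} (k : ℕ) (F : Set (EuclideanSpace ℝ (Fin d))) : Prop :=
  ∃ A : AffineSubspace ℝ (EuclideanSpace ℝ (Fin d)),
    (A : Set (EuclideanSpace ℝ (Fin d))).Nonempty ∧
    Module.finrank ℝ A.direction = k ∧ F = ↑A

/-- A collection `T` of `k`-flats pierces the family `𝓕`. -/
def PiercedByFlats {d : ℕ} (k : ℕ) (T 𝓕 : Set (Set (EuclideanSpace ℝ (Fin d)))) : Prop :=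
  (∀ f ∈ T, IsKFlat k f) ∧ ∀ B ∈ 𝓕, ∃ f ∈ T, (B ∩ f).Nonempty

/-- The family `𝓕` is pierceable by finitely many `k`-flats. -/
def FinFlatPierceable {d : ℕ} (k : ℕ) (𝓕 : Set (Set (EuclideanSpace ℝ (Fin d)))) : Prop :=
  ∃ T : Set (Set (EuclideanSpace ℝ (Fin d))), T.Finite ∧ PiercedByFlats k T 𝓕

/-- The family `𝓕` is pierceable by finitely many points. -/
def FinPointPierceable {d : ℕ} (𝓕 : Set (Set (EuclideanSpace ℝ (Fin d)))) : Prop :=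
  ∃ P : Set (EuclideanSpace ℝ (Fin d)), P.Finite ∧ ∀ B ∈ 𝓕, ∃ p ∈ P, p ∈ B

/-- A sequence of sets is `k`-dependent if some `k`-flat meets `k+2` distinct members
(i.e. members at `k+2` distinct indices). -/
def KDependent {d : ℕ} (k : ℕ) (B : ℕ → Set (EuclideanSpace ℝ (Fin d))) : Prop :=
  ∃ f : Set (EuclideanSpace ℝ (Fin d)), IsKFlat k f ∧
    ∃ idx : Finset ℕ, idx.card = k + 2 ∧ ∀ n ∈ idx, (f ∩ B n).Nonempty

/-- The (monochromatic) `(ℵ₀, k+2)`-property with respect to `k`-flats. -/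
def AlephProp {d : ℕ} (k : ℕ) (𝓕 : Set (Set (EuclideanSpace ℝ (Fin d)))) : Prop :=
  ∀ B : ℕ → Set (EuclideanSpace ℝ (Fin d)),
    Function.Injective B → (∀ n, B n ∈ 𝓕) → KDependent k B

theorem stmt2 (d k : ℕ) (hk : k < d)
    (ℬ : Set (Set (EuclideanSpace ℝ (Fin d))))
    (hcomp : ∀ S ∈ ℬ, IsCompact S) (hconv : ∀ S ∈ ℬ, Convex ℝ S)
    (Hmono : ∀ 𝓕 ⊆ ℬ, AlephProp k 𝓕 → FinFlatPierceable k 𝓕)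
    (Fam : ℕ → Set (Set (EuclideanSpace ℝ (Fin d))))
    (hFam : ∀ n, Fam n ⊆ ℬ)
    (hnp : ∀ n, ¬ FinFlatPierceable k (Fam n)) :
    ∃ i : ℕ → ℕ, StrictMono i ∧
      ∃ B : ℕ → Set (EuclideanSpace ℝ (Fin d)),
        (∀ n, B n ∈ Fam (i n)) ∧ ¬ KDependent k B := by
  classical
  -- Step 1: each family contains an infinite injective k-independent sequence
  have hC : ∀ n, ∃ C : ℕ → Set (EuclideanSpace ℝ (Fin d)),
      Function.Injective C ∧ (∀ j, C j ∈ Fam n) ∧ ¬ KDependent k C := by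
    intro n
    by_contra h
    push_neg at h
    exact hnp n (Hmono (Fam n) (hFam n) h)
  choose C hCinj hCmem hCind using hC
  -- the union of growing chunks
  set 𝓖 : Set (Set (EuclideanSpace ℝ (Fin d))) := ⋃ n, C n '' Set.Iic n with h𝓖
  have h𝓖B : 𝓖 ⊆ ℬ := by
    rintro S hS
    rw [h𝓖, Set.mem_iUnion] at hS
    obtain ⟨n, j, _, rfl⟩ := hS
    exact hFam n (hCmem n j)
  -- Step 2: 𝓖 fails the AlephProp
  have hnA : ¬ AlephProp k 𝓖 := by
    intro hA
    obtain ⟨T, hTfin, hTflat, hTp⟩ := Hmono 𝓖 h𝓖B hA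
    set c := hTfin.toFinset.card with hc
    set n := (k + 1) * c with hn
    have key : ∀ j : ℕ, j ≤ n → ∃ f ∈ hTfin.toFinset, ((C n j) ∩ f).Nonempty := by
      intro j hj
      obtain ⟨f, hfT, hne⟩ := hTp (C n j) (Set.mem_iUnion.mpr ⟨n, ⟨j, hj, rfl⟩⟩)
      exact ⟨f, hTfin.mem_toFinset.mpr hfT, hne⟩
    choose! g hg1 hg2 using key
    have hmaps : ∀ j ∈ Finset.range (n + 1), g j ∈ hTfin.toFinset := by
      intro j hj
      exact hg1 j (Nat.lt_succ_iff.mp (Finset.mem_range.mp hj))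
    have hcard : hTfin.toFinset.card * (k + 1) < (Finset.range (n + 1)).card := by
      rw [Finset.card_range, ← hc, hn, mul_comm]
      exact Nat.lt_succ_self _
    obtain ⟨f, hfT, hflt⟩ :=
      Finset.exists_lt_card_fiber_of_mul_lt_card_of_maps_to hmaps hcard
    obtain ⟨idx, hidxsub, hidxcard⟩ :=
      Finset.exists_subset_card_eq hflt
    refine hCind n ⟨f, hTflat f (hTfin.mem_toFinset.mp hfT), idx, hidxcard, ?_⟩
    intro j hj
    have hj' := hidxsub hj
    rw [Finset.mem_filter] at hj'
    obtain ⟨hjr, hjf⟩ := hj'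
    have := hg2 j (Nat.lt_succ_iff.mp (Finset.mem_range.mp hjr))
    rw [hjf] at this
    rwa [Set.inter_comm]
  -- Step 3: extract an independent sequence from 𝓖 and make the tags increase
  rw [AlephProp] at hnA
  push_neg at hnA
  obtain ⟨A, hAinj, hAmem, hAind⟩ := hnA
  have hν : ∀ m, ∃ n, A m ∈ C n '' Set.Iic n := by
    intro m
    exact Set.mem_iUnion.mp (hAmem m)
  choose ν hνs using hν
  have hfib : ∀ b : ℕ, {m | ν m ≤ b}.Finite := by
    intro b
    have hbig : (⋃ n ∈ Set.Iic b, C n '' Set.Iic n).Finite :=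
      (Set.finite_Iic b).biUnion (fun n _ => (Set.finite_Iic n).image _)
    have hsub : {m | ν m ≤ b} ⊆ A ⁻¹' (⋃ n ∈ Set.Iic b, C n '' Set.Iic n) := by
      intro m hm
      exact Set.mem_preimage.mpr (Set.mem_biUnion hm (hνs m))
    exact (hbig.preimage hAinj.injOn).subset hsub
  have hnext : ∀ a : ℕ, ∃ m', a < m' ∧ ν a < ν m' := by
    intro a
    have hfin : ({m | ν m ≤ ν a} ∪ Set.Iic a).Finite :=
      (hfib (ν a)).union (Set.finite_Iic a)
    obtain ⟨m', hm'⟩ := hfin.infinite_compl.nonempty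
    rw [Set.mem_compl_iff, Set.mem_union] at hm'
    push_neg at hm'
    obtain ⟨h1, h2⟩ := hm'
    exact ⟨m', lt_of_not_ge h2, lt_of_not_ge h1⟩
  let M : ℕ → ℕ := fun t => Nat.rec 0 (fun _ prev => (hnext prev).choose) t
  have hMspec : ∀ t, M t < M (t + 1) ∧ ν (M t) < ν (M (t + 1)) := by
    intro t
    exact (hnext (M t)).choose_spec
  have hMmono : StrictMono M := strictMono_nat_of_lt_succ (fun t => (hMspec t).1)
  refine ⟨fun t => ν (M t), strictMono_nat_of_lt_succ (fun t => (hMspec t).2),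
    fun t => A (M t), ?_, ?_⟩
  · intro t
    show A (M t) ∈ Fam (ν (M t))
    obtain ⟨j, _, hEq⟩ := hνs (M t)
    rw [← hEq]
    exact hCmem _ j
  · rintro ⟨f, hf, idx, hidxcard, hmeet⟩
    refine hAind ⟨f, hf, idx.image M, ?_, ?_⟩
    · rw [Finset.card_image_of_injective _ hMmono.injective, hidxcard]
    · intro m hm
      obtain ⟨t, ht, rfl⟩ := Finset.mem_image.mp hm
      exact hmeet t ht
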